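/- arXiv:2511.14200 — 2 statements merged into one kernel-verified Lean document; each statement's English description precedes it below -/
import Mathlib

section
/- For odd positive integers b_n (n ≥ 1), the stopping time T̃^p = inf{n ≥ 1 : |V_n^p| ≥ b_n} is stochastically increasing in p ∈ [0,1/2] and stochastically decreasing in p ∈ [1/2,1]; that is, for |p' - 1/2| > |p'' - 1/2| and every m ≥ 1, P(T̃^{p'} > m) ≤ P(T̃^{p''} > m). -/
/-!
Condition on the set `T ⊆ {1, …, m}` of up-steps. Started from `-1`, the walk with up-steps `T`
is the negative of the walk started from `+1` with up-steps `{1, …, m} \ T`, so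
`P(T̃ > m) = ½ ∑ₖ uₖ (pᵏ q^(m-k) + p^(m-k) qᵏ)`, where `uₖ` counts the surviving up-step
sets of size `k` for the walk started from `+1`. Writing `m! uₖ = (m choose k) Xₖ`, this is
`(2 m!)⁻¹ ∑ₖ (Xₖ + X_(m-k)) bₘ,ₖ(p)` in the Bernstein basis.

The normalised counts obey `X_(n+1)(k) = 1[k ∈ window] (k Xₙ(k-1) + (n+1-k) Xₙ(k))`.
Both the Pascal step and the truncation to the window (an interval `[a, c]` with
`a + c ∈ {n, n+1}`) preserve the property that `Xₖ + X_(n-k)` increases towards the centre.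
For coefficients that are symmetric and increase towards the centre, the derivative of the
Bernstein polynomial pairs off into terms of the sign of `1/2 - p`, so the polynomial increases
on `[0, 1/2]`, and by symmetry it only depends on `|p - 1/2|`.
-/

open MeasureTheory ProbabilityTheory Finset

/-- The distribution of a single increment of the Bernoulli random walk:
`+1` with probability `p` and `-1` with probability `1 - p`. -/
noncomputable def stepDist (p : ℝ) : Measure ℝ :=
  ENNReal.ofReal p • Measure.dirac 1 + ENNReal.ofReal (1 - p) • Measure.dirac (-1)

open Polynomial

open scoped Nat

lemma Finset.card_filter_powerset_insert {α : Type*} [DecidableEq α] {s : Finset α} {a : α}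
    (ha : a ∉ s) (P : Finset α → Prop) [DecidablePred P] :
    #{t ∈ (insert a s).powerset | P t} =
      #{t ∈ s.powerset | P t} + #{t ∈ s.powerset | P (insert a t)} := by
  simp only [card_filter]
  exact sum_powerset_insert ha _

lemma Finset.sum_powerset_sdiff {α M : Type*} [DecidableEq α] [AddCommMonoid M] (s : Finset α)
    (f : Finset α → M) : ∑ t ∈ s.powerset, f (s \ t) = ∑ t ∈ s.powerset, f t :=
  sum_nbij' (s \ ·) (s \ ·) (fun _ _ => mem_powerset.2 sdiff_subset)
    (fun _ _ => mem_powerset.2 sdiff_subset)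
    (fun _ ht => sdiff_sdiff_eq_self (mem_powerset.1 ht))
    (fun _ ht => sdiff_sdiff_eq_self (mem_powerset.1 ht)) fun _ _ => rfl

lemma Finset.prod_ite_mem_eq_pow {α R : Type*} [CommMonoid R] [DecidableEq α] {s t : Finset α}
    (ht : t ⊆ s) (a b : R) :
    ∏ i ∈ s, (if i ∈ t then a else b) = a ^ #t * b ^ (#s - #t) := by
  rw [prod_ite, prod_const, prod_const, filter_mem_eq_inter, inter_eq_right.2 ht,
    filter_notMem_eq_sdiff, card_sdiff_of_subset ht]

lemma Finset.range_add_one_eq_insert_zero_Icc (m : ℕ) : range (m + 1) = insert 0 (Icc 1 m) := by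
  ext i
  simp only [mem_range, mem_insert, mem_Icc]
  omega

noncomputable def bernsteinSum (n : ℕ) (U : ℕ → ℝ) : ℝ[X] :=
  ∑ k ∈ range (n + 1), U k • bernsteinPolynomial ℝ n k

lemma bernsteinSum_congr {n : ℕ} {U V : ℕ → ℝ} (h : ∀ k ≤ n, U k = V k) :
    bernsteinSum n U = bernsteinSum n V :=
  sum_congr rfl fun k hk => by rw [h k (Nat.lt_succ_iff.1 (mem_range.1 hk))]

lemma derivative_bernsteinSum (n : ℕ) (U : ℕ → ℝ) :
    derivative (bernsteinSum (n + 1) U) =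
      (n + 1 : ℝ[X]) * bernsteinSum n (fun k => U (k + 1) - U k) := by
  have hshift : ∑ k ∈ range (n + 1), U (k + 1) • bernsteinPolynomial ℝ n (k + 1) +
      U 0 • bernsteinPolynomial ℝ n 0 =
        ∑ k ∈ range (n + 1), U k • bernsteinPolynomial ℝ n k := by
    rw [← sum_range_succ' (fun k => U k • bernsteinPolynomial ℝ n k), sum_range_succ,
      bernsteinPolynomial.eq_zero_of_lt ℝ (lt_add_one n), smul_zero, add_zero]
  have hsplit : ∑ k ∈ range (n + 1), (U (k + 1) - U k) • bernsteinPolynomial ℝ n k =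
      ∑ k ∈ range (n + 1), (U (k + 1) • bernsteinPolynomial ℝ n k -
        U (k + 1) • bernsteinPolynomial ℝ n (k + 1)) - U 0 • bernsteinPolynomial ℝ n 0 := by
    rw [sum_sub_distrib, sub_sub, hshift, ← sum_sub_distrib]
    simp only [sub_smul]
  simp only [bernsteinSum, derivative_sum, derivative_smul]
  rw [sum_range_succ', bernsteinPolynomial.derivative_zero, hsplit, mul_sub, mul_sum,
    sub_eq_add_neg]
  simp only [bernsteinPolynomial.derivative_succ_aux, add_tsub_cancel_right, smul_eq_C_mul]
  congr 1
  · exact sum_congr rfl fun k _ => by ring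
  · push_cast
    ring

lemma bernsteinPolynomial_eval_one_sub {n k : ℕ} (h : k ≤ n) (p : ℝ) :
    (bernsteinPolynomial ℝ n k).eval (1 - p) = (bernsteinPolynomial ℝ n (n - k)).eval p := by
  rw [bernsteinPolynomial.flip' ℝ n k h, eval_comp]
  simp

lemma bernsteinPolynomial_eval_one_sub_le {n k : ℕ} (h : 2 * k ≤ n) {p : ℝ} (hp₀ : 0 ≤ p)
    (hp : p ≤ 1 / 2) :
    (bernsteinPolynomial ℝ n k).eval (1 - p) ≤ (bernsteinPolynomial ℝ n k).eval p := by
  obtain ⟨d, rfl⟩ : ∃ d, n = 2 * k + d := ⟨n - 2 * k, by omega⟩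
  simp only [bernsteinPolynomial, eval_mul, eval_pow, eval_sub, eval_one, eval_X, eval_natCast,
    sub_sub_cancel, show 2 * k + d - k = k + d by omega, pow_add]
  have hq : 0 ≤ 1 - p := by linarith
  have hpq : p ^ d ≤ (1 - p) ^ d := pow_le_pow_left₀ hp₀ (by linarith) d
  calc _ = ((2 * k + d).choose k : ℝ) * (1 - p) ^ k * p ^ k * p ^ d := by ring
    _ ≤ ((2 * k + d).choose k : ℝ) * (1 - p) ^ k * p ^ k * (1 - p) ^ d := by gcongr
    _ = _ := by ring

lemma bernsteinSum_eval_one_sub (n : ℕ) (U : ℕ → ℝ) (p : ℝ) :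
    (bernsteinSum n U).eval (1 - p) = (bernsteinSum n (fun k => U (n - k))).eval p := by
  simp only [bernsteinSum, eval_finsetSum, eval_smul, smul_eq_mul]
  rw [← sum_range_reflect]
  refine sum_congr rfl fun k hk => ?_
  have hk : k ≤ n := Nat.lt_succ_iff.1 (mem_range.1 hk)
  rw [add_tsub_cancel_right, bernsteinPolynomial_eval_one_sub (Nat.sub_le n k),
    Nat.sub_sub_self hk]

lemma bernsteinSum_eval_nonneg {n : ℕ} {D : ℕ → ℝ} (hanti : ∀ k ≤ n, D (n - k) = -D k)
    (hD : ∀ k, 2 * k ≤ n → 0 ≤ D k) {p : ℝ} (hp₀ : 0 ≤ p) (hp : p ≤ 1 / 2) :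
    0 ≤ (bernsteinSum n D).eval p := by
  set g : ℕ → ℝ := fun k => D k *
    ((bernsteinPolynomial ℝ n k).eval p - (bernsteinPolynomial ℝ n k).eval (1 - p))
  have hleft : ∀ k, 2 * k ≤ n → 0 ≤ g k := fun k hk =>
    mul_nonneg (hD k hk) (sub_nonneg.2 (bernsteinPolynomial_eval_one_sub_le hk hp₀ hp))
  have hmirror : ∀ k ≤ n, g (n - k) = g k := fun k hk => by
    simp only [g, hanti k hk, bernsteinPolynomial_eval_one_sub (Nat.sub_le n k),
      bernsteinPolynomial_eval_one_sub hk, Nat.sub_sub_self hk]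
    ring
  have hsum : 0 ≤ ∑ k ∈ range (n + 1), g k := sum_nonneg fun k hk => by
    rcases le_total (2 * k) n with h | h
    · exact hleft k h
    · have hk := Nat.lt_succ_iff.1 (mem_range.1 hk)
      rw [← hmirror k hk]
      exact hleft (n - k) (by omega)
  have hreflect : (bernsteinSum n D).eval (1 - p) = -(bernsteinSum n D).eval p := by
    rw [bernsteinSum_eval_one_sub, bernsteinSum_congr (V := -D) hanti]
    simp [bernsteinSum, eval_finsetSum]
  simp only [g, mul_sub, sum_sub_distrib] at hsum
  simp only [bernsteinSum, eval_finsetSum, eval_smul, smul_eq_mul] at hreflect ⊢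
  linarith

lemma monotoneOn_bernsteinSum_eval {n : ℕ} {U : ℕ → ℝ}
    (hsymm : ∀ k ≤ n, U (n - k) = U k)
    (hmono : ∀ k, 2 * k + 1 ≤ n → U k ≤ U (k + 1)) :
    MonotoneOn (fun p => (bernsteinSum n U).eval p) (Set.Icc 0 (1 / 2)) := by
  rcases n with _ | n
  · simp [bernsteinSum, bernsteinPolynomial, monotoneOn_const]
  refine monotoneOn_of_deriv_nonneg (convex_Icc 0 (1 / 2)) (Polynomial.continuousOn _)
    (Polynomial.differentiable _).differentiableOn fun p hp => ?_
  rw [interior_Icc] at hp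
  rw [Polynomial.deriv, derivative_bernsteinSum, eval_mul]
  refine mul_nonneg (by simp only [eval_add, eval_natCast, eval_one]; positivity)
    (bernsteinSum_eval_nonneg (fun k hk => ?_) (fun k hk => sub_nonneg.2 (hmono k (by omega)))
      hp.1.le hp.2.le)
  rw [show n - k + 1 = n + 1 - k by omega, hsymm k (by omega),
    show n - k = n + 1 - (k + 1) by omega, hsymm (k + 1) (by omega)]
  ring

lemma bernsteinSum_eval_le_of_abs_sub_half_le {n : ℕ} {U : ℕ → ℝ}
    (hsymm : ∀ k ≤ n, U (n - k) = U k) (hmono : ∀ k, 2 * k + 1 ≤ n → U k ≤ U (k + 1))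
    {p₁ p₂ : ℝ} (h₁ : p₁ ∈ Set.Icc (0 : ℝ) 1) (h₂ : p₂ ∈ Set.Icc (0 : ℝ) 1)
    (h : |p₂ - 1 / 2| ≤ |p₁ - 1 / 2|) :
    (bernsteinSum n U).eval p₁ ≤ (bernsteinSum n U).eval p₂ := by
  have hreflect : ∀ p, (bernsteinSum n U).eval (1 - p) = (bernsteinSum n U).eval p := fun p => by
    rw [bernsteinSum_eval_one_sub, bernsteinSum_congr hsymm]
  have hfold : ∀ p ∈ Set.Icc (0 : ℝ) 1, (bernsteinSum n U).eval p =
      (bernsteinSum n U).eval (1 / 2 - |p - 1 / 2|) ∧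
        1 / 2 - |p - 1 / 2| ∈ Set.Icc (0 : ℝ) (1 / 2) := by
    intro p ⟨hp₀, hp₁⟩
    rcases le_total p (1 / 2) with hp | hp
    · rw [abs_of_nonpos (by linarith)]
      exact ⟨by ring_nf, by constructor <;> linarith⟩
    · rw [abs_of_nonneg (by linarith), ← hreflect]
      exact ⟨by ring_nf, by constructor <;> linarith⟩
  obtain ⟨e₁, m₁⟩ := hfold p₁ h₁
  obtain ⟨e₂, m₂⟩ := hfold p₂ h₂
  rw [e₁, e₂]
  exact monotoneOn_bernsteinSum_eval hsymm hmono m₁ m₂ (by linarith)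

def MirrorSumMonotone (n : ℕ) (f : ℕ → ℕ) : Prop :=
  ∀ k, 2 * k + 1 ≤ n → f k + f (n - k) ≤ f (k + 1) + f (n - (k + 1))

def InWindow (r n k : ℕ) : Prop := n ≤ 2 * k + r ∧ 2 * k + 1 ≤ n + r

instance (r n k : ℕ) : Decidable (InWindow r n k) := inferInstanceAs (Decidable (_ ∧ _))

namespace MirrorSumMonotone

variable {n : ℕ} {f : ℕ → ℕ}

lemma pascal (hf : MirrorSumMonotone n f) :
    MirrorSumMonotone (n + 1) (fun k => k * f (k - 1) + (n + 1 - k) * f k) := by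
  intro k hk
  rcases (show 2 * k = n ∨ 2 * k + 1 ≤ n by omega) with rfl | hk
  · rw [show 2 * k + 1 - k = k + 1 by omega, show 2 * k + 1 - (k + 1) = k by omega, add_comm]
  -- With `Δ i := f (i + 1) + f (n - (i + 1)) - f i - f (n - i) ≥ 0`, the increment of the
  -- new mirror sum at `k` is `(n - k) Δ k + k Δ (k - 1)`.
  obtain ⟨j, rfl⟩ : ∃ j, n = 2 * k + 1 + j := ⟨n - (2 * k + 1), by omega⟩
  have hA := hf k hk
  rw [show 2 * k + 1 + j - k = k + 1 + j by omega,
    show 2 * k + 1 + j - (k + 1) = k + j by omega] at hA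
  have hB : k * (f (k - 1) + f (k + 2 + j)) ≤ k * (f k + f (k + 1 + j)) := by
    rcases k with _ | k
    · simp
    · have := hf k (by omega)
      rw [show 2 * (k + 1) + 1 + j - k = k + 1 + 2 + j by omega,
        show 2 * (k + 1) + 1 + j - (k + 1) = k + 1 + 1 + j by omega] at this
      exact Nat.mul_le_mul_left _ this
  beta_reduce
  rw [show 2 * k + 1 + j + 1 - k = k + 2 + j by omega,
    show 2 * k + 1 + j + 1 - (k + 1) = k + 1 + j by omega,
    show 2 * k + 1 + j + 1 - (k + 2 + j) = k by omega,
    show 2 * k + 1 + j + 1 - (k + 1 + j) = k + 1 by omega,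
    show k + 2 + j - 1 = k + 1 + j by omega, show k + 1 + j - 1 = k + j by omega,
    show k + 1 - 1 = k by omega]
  nlinarith [Nat.mul_le_mul_left (k + 1 + j) hA]

lemma window (hf : MirrorSumMonotone n f) (r : ℕ) :
    MirrorSumMonotone n (fun k => if InWindow r n k then f k else 0) := by
  intro k hk
  rcases (show 2 * k + 1 = n ∨ 2 * k + 2 ≤ n by omega) with rfl | hk'
  · rw [show 2 * k + 1 - k = k + 1 by omega, show 2 * k + 1 - (k + 1) = k by omega, add_comm]
  -- For `2 * k + 2 ≤ n` the window contains `n - (k + 1)` if it contains `k` and `k + 1`,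
  -- and misses `n - k` otherwise.
  have := hf k hk
  beta_reduce
  split_ifs <;> simp only [InWindow] at * <;> omega

end MirrorSumMonotone

def mirrorSum (n : ℕ) (f : ℕ → ℕ) (k : ℕ) : ℝ := f k + f (n - k)

lemma mirrorSum_symm (n : ℕ) (f : ℕ → ℕ) {k : ℕ} (hk : k ≤ n) :
    mirrorSum n f (n - k) = mirrorSum n f k := by
  rw [mirrorSum, mirrorSum, Nat.sub_sub_self hk, add_comm]

lemma MirrorSumMonotone.mirrorSum_le {n : ℕ} {f : ℕ → ℕ} (hf : MirrorSumMonotone n f)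
    {k : ℕ} (hk : 2 * k + 1 ≤ n) : mirrorSum n f k ≤ mirrorSum n f (k + 1) := by
  unfold mirrorSum
  exact_mod_cast hf k hk

/-- The walk started at `+1` whose up-steps are at the times in `T` stays strictly between
`-b j` and `b j` at all times `1 ≤ j ≤ n`. -/
def Survives (b : ℕ → ℕ) (n : ℕ) (T : Finset ℕ) : Prop :=
  ∀ j ∈ Icc 1 n, |1 + 2 * (2 * (#(T ∩ Icc 1 j) : ℤ) - j)| < b j

instance (b : ℕ → ℕ) (n : ℕ) : DecidablePred (Survives b n) :=
  fun _ => inferInstanceAs (Decidable (∀ j ∈ _, _))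

def survivorCount (b : ℕ → ℕ) (n k : ℕ) : ℕ :=
  #{T ∈ (Icc 1 n).powerset | Survives b n T ∧ #T = k}

/-- `n! · survivorCount b n k / n.choose k`: `n!` times the survival probability of a walk
whose `k` up-steps are placed uniformly at random among the first `n` steps. -/
def survivorWeight (b : ℕ → ℕ) (n k : ℕ) : ℕ :=
  survivorCount b n k * k ! * (n - k)!

-- The walk only takes odd values, so only `⌊b / 2⌋` matters.
lemma abs_walk_lt_iff (c j b : ℕ) :
    |1 + 2 * (2 * (c : ℤ) - j)| < b ↔ InWindow (b / 2) j c := by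
  rw [abs_lt, InWindow]
  omega

section Survives

variable (b : ℕ → ℕ)

lemma survives_succ_iff (n : ℕ) (T : Finset ℕ) :
    Survives b (n + 1) T ↔
      Survives b n T ∧
        |1 + 2 * (2 * (#(T ∩ Icc 1 (n + 1)) : ℤ) - (n + 1 : ℕ))| < b (n + 1) := by
  simp only [Survives, mem_Icc]
  refine ⟨fun h => ⟨fun j hj => h j (by omega), h (n + 1) (by omega)⟩,
    fun ⟨h, hn⟩ j hj => ?_⟩
  rcases (show j ≤ n ∨ j = n + 1 by omega) with hj' | rfl
  · exact h j ⟨hj.1, hj'⟩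
  · exact hn

lemma survives_insert_iff {n a : ℕ} (ha : n < a) (T : Finset ℕ) :
    Survives b n (insert a T) ↔ Survives b n T :=
  forall₂_congr fun j hj => by rw [insert_inter_of_notMem (by simp at hj ⊢; omega)]

lemma survivorCount_eq_zero_of_lt {n k : ℕ} (h : n < k) : survivorCount b n k = 0 := by
  refine card_eq_zero.2 (filter_eq_empty_iff.2 fun T hT ⟨_, hk⟩ => ?_)
  have := card_le_card (mem_powerset.1 hT)
  simp only [Nat.card_Icc, add_tsub_cancel_right] at this
  omega

lemma survivorCount_succ (n k : ℕ) :
    survivorCount b (n + 1) k = if InWindow (b (n + 1) / 2) (n + 1) k then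
      survivorCount b n k + #{T ∈ (Icc 1 n).powerset | Survives b n T ∧ #T + 1 = k} else 0 := by
  have hn : n + 1 ∉ Icc 1 n := by simp
  rw [survivorCount, ← insert_Icc_right_eq_Icc_add_one (by omega),
    card_filter_powerset_insert hn]
  have hstay : ∀ T ∈ (Icc 1 n).powerset, Survives b (n + 1) T ∧ #T = k ↔
      InWindow (b (n + 1) / 2) (n + 1) k ∧ (Survives b n T ∧ #T = k) := by
    intro T hT
    have hT' : T ∩ Icc 1 (n + 1) = T :=
      inter_eq_left.2 ((mem_powerset.1 hT).trans (Icc_subset_Icc_right (by omega)))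
    rw [survives_succ_iff, hT', abs_walk_lt_iff]
    by_cases hk : #T = k
    · subst hk; tauto
    · simp [hk]
  have hup : ∀ T ∈ (Icc 1 n).powerset,
      Survives b (n + 1) (insert (n + 1) T) ∧ #(insert (n + 1) T) = k ↔
        InWindow (b (n + 1) / 2) (n + 1) k ∧ (Survives b n T ∧ #T + 1 = k) := by
    intro T hT
    have hT' : insert (n + 1) T ∩ Icc 1 (n + 1) = insert (n + 1) T :=
      inter_eq_left.2 (insert_subset (by simp)
        ((mem_powerset.1 hT).trans (Icc_subset_Icc_right (by omega))))
    rw [survives_succ_iff, survives_insert_iff b (lt_add_one n), hT',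
      card_insert_of_notMem (fun h => hn (mem_powerset.1 hT h)), abs_walk_lt_iff]
    by_cases hk : #T + 1 = k
    · subst hk; tauto
    · simp [hk]
  rw [filter_congr hstay, filter_congr hup]
  split_ifs with hW
  · simp only [hW, true_and, survivorCount]
  · simp only [hW, false_and, filter_false, card_empty]

lemma survivorWeight_succ (n k : ℕ) :
    survivorWeight b (n + 1) k = if InWindow (b (n + 1) / 2) (n + 1) k then
      k * survivorWeight b n (k - 1) + (n + 1 - k) * survivorWeight b n k else 0 := by
  rw [survivorWeight, survivorCount_succ]
  split_ifs
  · rcases k with _ | k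
    · simp [survivorWeight, Nat.factorial_succ]
      ring
    have hlast : survivorCount b n (k + 1) * (n - k)! =
        (n - k) * (survivorCount b n (k + 1) * (n - (k + 1))!) := by
      rcases le_or_gt (k + 1) n with h | h
      · rw [← Nat.mul_factorial_pred (show n - k ≠ 0 by omega), Nat.sub_sub]
        ring
      · simp [survivorCount_eq_zero_of_lt b h]
    have hprev : #{T ∈ (Icc 1 n).powerset | Survives b n T ∧ #T + 1 = k + 1} =
        survivorCount b n k := by
      simp [survivorCount]
    simp only [hprev, survivorWeight, Nat.factorial_succ,
      show n + 1 - (k + 1) = n - k by omega, add_tsub_cancel_right]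
    linear_combination (k + 1) * k ! * hlast
  · simp

theorem mirrorSumMonotone_survivorWeight (n : ℕ) : MirrorSumMonotone n (survivorWeight b n) := by
  induction n with
  | zero => intro k hk; omega
  | succ n ih =>
    rw [show survivorWeight b (n + 1) = _ from funext (survivorWeight_succ b n)]
    exact ih.pascal.window (b (n + 1) / 2)

lemma sum_survives_eq_sum_survivorCount (m : ℕ) (f : ℕ → ℝ) :
    ∑ T ∈ (Icc 1 m).powerset with Survives b m T, f #T =
      ∑ k ∈ range (m + 1), (survivorCount b m k : ℝ) * f k := by
  rw [← sum_fiberwise_of_maps_to' (t := range (m + 1)) (g := card) _ f]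
  · refine sum_congr rfl fun k _ => ?_
    rw [sum_const, filter_filter, nsmul_eq_mul]
    rfl
  · intro T hT
    have := card_le_card (mem_powerset.1 (mem_filter.1 hT).1)
    simp only [Nat.card_Icc, add_tsub_cancel_right] at this
    exact mem_range.2 (by omega)

lemma bernsteinSum_mirrorSum_survivorWeight_eval (m : ℕ) (p : ℝ) :
    (bernsteinSum m (mirrorSum m (survivorWeight b m))).eval p =
      m ! * ∑ k ∈ range (m + 1), (survivorCount b m k : ℝ) *
        (p ^ k * (1 - p) ^ (m - k) + p ^ (m - k) * (1 - p) ^ k) := by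
  have hcount : ∀ k ≤ m,
      (m.choose k : ℝ) * survivorWeight b m k = m ! * survivorCount b m k := by
    intro k hk
    rw [survivorWeight, ← Nat.choose_mul_factorial_mul_factorial hk]
    push_cast
    ring
  have hreflect :
      ∑ k ∈ range (m + 1), (survivorCount b m k : ℝ) * (p ^ (m - k) * (1 - p) ^ k) =
      ∑ k ∈ range (m + 1), (survivorCount b m (m - k) : ℝ) * (p ^ k * (1 - p) ^ (m - k)) := by
    rw [← sum_range_reflect]
    refine sum_congr rfl fun k hk => ?_
    rw [add_tsub_cancel_right, Nat.sub_sub_self (Nat.lt_succ_iff.1 (mem_range.1 hk))]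
  simp only [mul_add, sum_add_distrib]
  rw [hreflect, ← mul_add, ← sum_add_distrib, mul_sum]
  simp only [bernsteinSum, eval_finsetSum, eval_smul, smul_eq_mul, bernsteinPolynomial, eval_mul,
    eval_pow, eval_natCast, eval_X, eval_sub, eval_one, mirrorSum]
  refine sum_congr rfl fun k hk => ?_
  have hk := Nat.lt_succ_iff.1 (mem_range.1 hk)
  have hmirror := hcount (m - k) (Nat.sub_le m k)
  rw [Nat.choose_symm hk] at hmirror
  linear_combination (p ^ k * (1 - p) ^ (m - k)) * (hcount k hk + hmirror)

end Survives

def signOf (S : Finset ℕ) (i : ℕ) : ℝ := if i ∈ S then 1 else -1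

lemma signOf_injOn {N : ℕ} {S S' : Finset ℕ} (hS : S ⊆ range N) (hS' : S' ⊆ range N)
    (h : ∀ i < N, signOf S i = signOf S' i) : S = S' := by
  ext i
  by_cases hi : i < N
  · have := h i hi
    unfold signOf at this
    split_ifs at this <;> simp_all <;> norm_num at this
  · exact iff_of_false (fun h => hi (mem_range.1 (hS h))) (fun h => hi (mem_range.1 (hS' h)))

lemma stepDist_singleton_signOf (p : ℝ) (S : Finset ℕ) (i : ℕ) :
    stepDist p {signOf S i} = ENNReal.ofReal (if i ∈ S then p else 1 - p) := by
  unfold stepDist signOf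
  split_ifs <;> simp [Set.indicator, show (1 : ℝ) ≠ -1 by norm_num,
    show (-1 : ℝ) ≠ 1 by norm_num]

lemma ae_stepDist (p : ℝ) : ∀ᵐ x ∂stepDist p, x = 1 ∨ x = -1 := by
  simp only [stepDist, ae_add_measure_iff]
  constructor <;> refine Measure.ae_smul_measure ?_ _ <;> simp [ae_dirac_eq]

lemma ite_nonneg_of_mem_Icc {q : ℝ} (hq : q ∈ Set.Icc (0 : ℝ) 1) (c : Prop) [Decidable c] :
    0 ≤ if c then q else 1 - q := by
  split_ifs <;> linarith [hq.1, hq.2]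

def patternWeight (q : ℕ → ℝ) (N : ℕ) (S : Finset ℕ) : ℝ :=
  ∏ i ∈ range N, if i ∈ S then q i else 1 - q i

section SignPattern

variable {Ω : Type*} {Y : ℕ → Ω → ℝ} {N : ℕ}

def signPatternSet (Y : ℕ → Ω → ℝ) (N : ℕ) (S : Finset ℕ) : Set Ω :=
  ⋂ i ∈ range N, Y i ⁻¹' {signOf S i}

lemma mem_signPatternSet {S : Finset ℕ} {ω : Ω} :
    ω ∈ signPatternSet Y N S ↔ ∀ i < N, Y i ω = signOf S i := by
  simp [signPatternSet]

lemma pairwiseDisjoint_signPatternSet :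
    ((range N).powerset : Set (Finset ℕ)).PairwiseDisjoint (signPatternSet Y N) := by
  intro S hS S' hS' hne
  refine Set.disjoint_left.2 fun ω hω hω' => hne (signOf_injOn (N := N) (mem_powerset.1 hS)
    (mem_powerset.1 hS') fun i hi => ?_)
  rw [mem_signPatternSet] at hω hω'
  exact (hω i hi).symm.trans (hω' i hi)

variable [MeasurableSpace Ω] {μ : Measure Ω} {q : ℕ → ℝ}

lemma measure_signPatternSet (hY : ∀ i, Measurable (Y i)) (hindep : iIndepFun Y μ)
    (hq : ∀ i < N, μ.map (Y i) = stepDist (q i))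
    (hq₀₁ : ∀ i < N, q i ∈ Set.Icc (0 : ℝ) 1)
    (S : Finset ℕ) : μ (signPatternSet Y N S) = ENNReal.ofReal (patternWeight q N S) := by
  rw [signPatternSet, hindep.measure_inter_preimage_eq_mul _ fun i _ => measurableSet_singleton _,
    patternWeight, ENNReal.ofReal_prod_of_nonneg fun i hi =>
      ite_nonneg_of_mem_Icc (hq₀₁ i (mem_range.1 hi)) _]
  refine prod_congr rfl fun i hi => ?_
  rw [← Measure.map_apply (hY i) (measurableSet_singleton _), hq i (mem_range.1 hi),
    stepDist_singleton_signOf]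

open Classical in
lemma setOf_ae_eq_biUnion_signPatternSet (hY : ∀ i, Measurable (Y i))
    (hq : ∀ i < N, μ.map (Y i) = stepDist (q i))
    (P : (ℕ → ℝ) → Prop) (hP : ∀ x y, (∀ i < N, x i = y i) → P x → P y) :
    {ω | P (fun i => Y i ω)} =ᵐ[μ]
      ⋃ S ∈ ({S ∈ (range N).powerset | P (signOf S)} : Finset _), signPatternSet Y N S := by
  have hsigns : ∀ᵐ ω ∂μ, ∀ i ∈ range N, Y i ω = 1 ∨ Y i ω = -1 := by
    refine (Filter.eventually_all_finset _).2 fun i hi =>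
      ae_of_ae_map (p := fun y => y = 1 ∨ y = -1) (hY i).aemeasurable ?_
    rw [hq i (mem_range.1 hi)]
    exact ae_stepDist _
  filter_upwards [hsigns] with ω hω
  set S₀ := {i ∈ range N | Y i ω = 1}
  have hS₀ : ∀ i < N, Y i ω = signOf S₀ i := fun i hi => by
    rcases hω i (mem_range.2 hi) with h | h <;> simp [signOf, S₀, h, hi]
  have hmem : ∀ S ∈ (range N).powerset, ω ∈ signPatternSet Y N S ↔ S = S₀ := by
    intro S hS
    rw [mem_signPatternSet]
    refine ⟨fun h => signOf_injOn (mem_powerset.1 hS) (filter_subset _ _)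
      fun i hi => (h i hi).symm.trans (hS₀ i hi), ?_⟩
    rintro rfl
    exact hS₀
  change P (fun i => Y i ω) = (ω ∈ ⋃ S ∈ _, signPatternSet Y N S)
  rw [Set.mem_iUnion₂]
  refine propext ⟨fun h => ⟨S₀, mem_filter.2 ⟨mem_powerset.2 (filter_subset _ _),
    hP _ _ hS₀ h⟩, (hmem S₀ (mem_powerset.2 (filter_subset _ _))).2 rfl⟩, ?_⟩
  rintro ⟨S, hS, hωS⟩
  obtain ⟨hS, hPS⟩ := mem_filter.1 hS
  rw [(hmem S hS).1 hωS] at hPS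
  exact hP _ _ (fun i hi => (hS₀ i hi).symm) hPS

open Classical in
lemma measure_setOf_eq_sum_patternWeight (hY : ∀ i, Measurable (Y i)) (hindep : iIndepFun Y μ)
    (hq : ∀ i < N, μ.map (Y i) = stepDist (q i))
    (hq₀₁ : ∀ i < N, q i ∈ Set.Icc (0 : ℝ) 1)
    (P : (ℕ → ℝ) → Prop) (hP : ∀ x y, (∀ i < N, x i = y i) → P x → P y) :
    μ {ω | P (fun i => Y i ω)} =
      ENNReal.ofReal (∑ S ∈ (range N).powerset with P (signOf S), patternWeight q N S) := by
  rw [measure_congr (setOf_ae_eq_biUnion_signPatternSet hY hq P hP),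
    measure_biUnion_finset
      (pairwiseDisjoint_signPatternSet.subset (coe_subset.2 (filter_subset _ _)))
      fun S _ => Finset.measurableSet_biInter _ fun i _ => hY i (measurableSet_singleton _),
    ENNReal.ofReal_sum_of_nonneg (f := patternWeight q N) fun S _ =>
      prod_nonneg fun i hi => ite_nonneg_of_mem_Icc (hq₀₁ i (mem_range.1 hi)) _]
  exact sum_congr rfl fun S _ => measure_signPatternSet hY hindep hq hq₀₁ S

end SignPattern

def WalkSurvives (b : ℕ → ℕ) (m : ℕ) (x : ℕ → ℝ) : Prop :=
  ∀ n, 1 ≤ n → n ≤ m → |x 0 + 2 * ∑ i ∈ range n, x (i + 1)| < b n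

section WalkSurvives

variable {b : ℕ → ℕ} {m : ℕ}

lemma WalkSurvives.congr {x y : ℕ → ℝ} (h : ∀ i < m + 1, x i = y i)
    (hx : WalkSurvives b m x) : WalkSurvives b m y := by
  intro n h₁ h₂
  rw [← h 0 (by omega), ← sum_congr rfl fun i hi => h (i + 1) (by simp at hi; omega)]
  exact hx n h₁ h₂

lemma walkSurvives_neg_iff {x : ℕ → ℝ} : WalkSurvives b m (-x) ↔ WalkSurvives b m x := by
  have h : ∀ n, (-x) 0 + 2 * ∑ i ∈ range n, (-x) (i + 1) =
      -(x 0 + 2 * ∑ i ∈ range n, x (i + 1)) := fun n => by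
    simp only [Pi.neg_apply, sum_neg_distrib]
    ring
  simp only [WalkSurvives, h, abs_neg]

lemma sum_range_signOf_succ (S : Finset ℕ) (n : ℕ) :
    ∑ i ∈ range n, signOf S (i + 1) = 2 * (#(S ∩ Icc 1 n) : ℝ) - n := by
  have h : ∀ i, signOf S i = 2 * (if i ∈ S then 1 else 0) - 1 := fun i => by
    unfold signOf; split_ifs <;> ring
  rw [range_eq_Ico, sum_Ico_add' (fun i => signOf S i), zero_add, Ico_add_one_right_eq_Icc]
  simp only [h, sum_sub_distrib, ← mul_sum, sum_boole, filter_mem_eq_inter, inter_comm,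
    sum_const, Nat.card_Icc, add_tsub_cancel_right, nsmul_eq_mul, mul_one]

lemma walkSurvives_signOf_insert_zero_iff (T : Finset ℕ) :
    WalkSurvives b m (signOf (insert 0 T)) ↔ Survives b m T := by
  have h0 : ∀ n, insert 0 T ∩ Icc 1 n = T ∩ Icc 1 n := fun n =>
    insert_inter_of_notMem (by simp)
  simp only [WalkSurvives, Survives, sum_range_signOf_succ, h0, mem_Icc, and_imp]
  refine forall₃_congr fun n _ _ => ?_
  rw [show signOf (insert 0 T) 0 = 1 by simp [signOf]]
  exact_mod_cast Iff.rfl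

lemma walkSurvives_signOf_iff {T : Finset ℕ} (hT : T ⊆ Icc 1 m) :
    WalkSurvives b m (signOf T) ↔ Survives b m (Icc 1 m \ T) := by
  have h : ∀ i < m + 1, signOf T i = (-signOf (insert 0 (Icc 1 m \ T))) i := by
    intro i hi
    rcases Nat.eq_zero_or_pos i with rfl | hi₀
    · simp [signOf, show 0 ∉ T from fun h => by simpa using hT h]
    · have : i ∈ Icc 1 m := mem_Icc.2 ⟨hi₀, by omega⟩
      by_cases hiT : i ∈ T <;> simp [signOf, hiT, this, hi₀.ne']
  rw [← walkSurvives_signOf_insert_zero_iff,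
    ← walkSurvives_neg_iff (x := signOf (insert 0 (Icc 1 m \ T)))]
  exact ⟨WalkSurvives.congr h, WalkSurvives.congr fun i hi => (h i hi).symm⟩

end WalkSurvives

noncomputable def upProb (p : ℝ) (i : ℕ) : ℝ := if i = 0 then 1 / 2 else p

lemma patternWeight_upProb {m : ℕ} {T S : Finset ℕ} (hT : T ⊆ Icc 1 m)
    (hS : S = T ∨ S = insert 0 T) (p : ℝ) :
    patternWeight (upProb p) (m + 1) S = 2⁻¹ * (p ^ #T * (1 - p) ^ (m - #T)) := by
  have hterm : ∀ i ∈ Icc 1 m, (if i ∈ S then upProb p i else 1 - upProb p i) =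
      if i ∈ T then p else 1 - p := fun i hi => by
    have hi₀ : i ≠ 0 := by simp at hi; omega
    have hiS : i ∈ S ↔ i ∈ T := by rcases hS with rfl | rfl <;> simp [hi₀]
    simp only [upProb, hi₀, if_false]
    exact if_congr hiS rfl rfl
  rw [patternWeight, range_add_one_eq_insert_zero_Icc, prod_insert (by simp),
    prod_congr rfl hterm, prod_ite_mem_eq_pow hT, Nat.card_Icc, add_tsub_cancel_right]
  congr 1
  split_ifs <;> norm_num [upProb]

open Classical in
lemma sum_walkSurvives_patternWeight (b : ℕ → ℕ) (m : ℕ) (p : ℝ) :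
    ∑ S ∈ (range (m + 1)).powerset with WalkSurvives b m (signOf S),
        patternWeight (upProb p) (m + 1) S =
      2⁻¹ * ∑ T ∈ (Icc 1 m).powerset with Survives b m T,
        (p ^ #T * (1 - p) ^ (m - #T) + p ^ (m - #T) * (1 - p) ^ #T) := by
  have hdown : ∀ T ∈ (Icc 1 m).powerset,
      (if WalkSurvives b m (signOf T) then patternWeight (upProb p) (m + 1) T else 0) =
        if Survives b m (Icc 1 m \ T) then
          2⁻¹ * (p ^ (m - #(Icc 1 m \ T)) * (1 - p) ^ #(Icc 1 m \ T)) else 0 := by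
    intro T hT
    have hT := mem_powerset.1 hT
    rw [card_sdiff_of_subset hT, Nat.card_Icc, add_tsub_cancel_right,
      Nat.sub_sub_self (by simpa using card_le_card hT), patternWeight_upProb hT (Or.inl rfl)]
    exact if_congr (walkSurvives_signOf_iff hT) rfl rfl
  have hup : ∀ T ∈ (Icc 1 m).powerset,
      (if WalkSurvives b m (signOf (insert 0 T)) then
        patternWeight (upProb p) (m + 1) (insert 0 T) else 0) =
      if Survives b m T then 2⁻¹ * (p ^ #T * (1 - p) ^ (m - #T)) else 0 := by
    intro T hT
    rw [patternWeight_upProb (mem_powerset.1 hT) (Or.inr rfl)]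
    exact if_congr (walkSurvives_signOf_insert_zero_iff T) rfl rfl
  have hcompl : ∑ T ∈ (Icc 1 m).powerset, (if Survives b m (Icc 1 m \ T) then
        2⁻¹ * (p ^ (m - #(Icc 1 m \ T)) * (1 - p) ^ #(Icc 1 m \ T)) else 0) =
      ∑ T ∈ (Icc 1 m).powerset,
        if Survives b m T then 2⁻¹ * (p ^ (m - #T) * (1 - p) ^ #T) else 0 :=
    sum_powerset_sdiff (Icc 1 m)
      fun U => if Survives b m U then 2⁻¹ * (p ^ (m - #U) * (1 - p) ^ #U) else 0
  rw [sum_filter, range_add_one_eq_insert_zero_Icc, sum_powerset_insert (by simp),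
    sum_congr rfl hdown, sum_congr rfl hup, hcompl,
    ← sum_add_distrib, sum_filter, mul_sum]
  refine sum_congr rfl fun T _ => ?_
  split_ifs <;> ring

lemma measure_walkSurvives_eq {Ω : Type*} [MeasurableSpace Ω] {μ : Measure Ω} {p : ℝ}
    (hp : p ∈ Set.Icc (0 : ℝ) 1) {Y : ℕ → Ω → ℝ} (hY : ∀ i, Measurable (Y i))
    (hindep : iIndepFun Y μ) (h0 : μ.map (Y 0) = stepDist (1 / 2))
    (hstep : ∀ i, μ.map (Y (i + 1)) = stepDist p) (b : ℕ → ℕ) (m : ℕ) :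
    μ {ω | WalkSurvives b m (fun i => Y i ω)} =
      ENNReal.ofReal ((bernsteinSum m (mirrorSum m (survivorWeight b m))).eval p / (2 * m !)) := by
  have hq : ∀ i < m + 1, μ.map (Y i) = stepDist (upProb p i) := by
    rintro (_ | i) _
    · exact h0
    · exact hstep i
  have hq₀₁ : ∀ i < m + 1, upProb p i ∈ Set.Icc (0 : ℝ) 1 := fun i _ => by
    unfold upProb
    split_ifs
    · norm_num
    · exact hp
  rw [measure_setOf_eq_sum_patternWeight hY hindep hq hq₀₁ _ fun x y h => WalkSurvives.congr h,
    sum_walkSurvives_patternWeight, sum_survives_eq_sum_survivorCount b m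
      (fun k => p ^ k * (1 - p) ^ (m - k) + p ^ (m - k) * (1 - p) ^ k),
    bernsteinSum_mirrorSum_survivorWeight_eval]
  congr 1
  field_simp

theorem doubled_walk_stopping_time_stochastically_monotone_general
    {Ω' Ω'' : Type*} [MeasurableSpace Ω'] [MeasurableSpace Ω'']
    (μ' : Measure Ω') (μ'' : Measure Ω'')
    (p' p'' : ℝ) (hp' : p' ∈ Set.Icc (0 : ℝ) 1) (hp'' : p'' ∈ Set.Icc (0 : ℝ) 1)
    (hpp : |p' - 1/2| > |p'' - 1/2|)
    (Y' : ℕ → Ω' → ℝ) (Y'' : ℕ → Ω'' → ℝ)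
    (hY'meas : ∀ i, Measurable (Y' i)) (hY''meas : ∀ i, Measurable (Y'' i))
    (hY'indep : iIndepFun Y' μ')
    (hY''indep : iIndepFun Y'' μ'')
    (hY'0dist : Measure.map (Y' 0) μ' = stepDist (1/2))
    (hY''0dist : Measure.map (Y'' 0) μ'' = stepDist (1/2))
    (hY'dist : ∀ i, Measure.map (Y' (i + 1)) μ' = stepDist p')
    (hY''dist : ∀ i, Measure.map (Y'' (i + 1)) μ'' = stepDist p'')
    (b : ℕ → ℕ)
    (m : ℕ) :
    μ' {ω | ∀ n, 1 ≤ n → n ≤ m →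
        |Y' 0 ω + 2 * ∑ i ∈ Finset.range n, Y' (i + 1) ω| < (b n : ℝ)}
      ≤ μ'' {ω | ∀ n, 1 ≤ n → n ≤ m →
        |Y'' 0 ω + 2 * ∑ i ∈ Finset.range n, Y'' (i + 1) ω| < (b n : ℝ)} := by
  have hcompare := bernsteinSum_eval_le_of_abs_sub_half_le
    (fun k hk => mirrorSum_symm m (survivorWeight b m) hk)
    (fun k hk => (mirrorSumMonotone_survivorWeight b m).mirrorSum_le hk) hp' hp'' hpp.le
  calc _ = _ := measure_walkSurvives_eq hp' hY'meas hY'indep hY'0dist hY'dist b m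
    _ ≤ _ := ENNReal.ofReal_le_ofReal (div_le_div_of_nonneg_right hcompare (by positivity))
    _ = _ := (measure_walkSurvives_eq hp'' hY''meas hY''indep hY''0dist hY''dist b m).symm

/-- **Corollary 3.** Consider the walk `V^p_n = X_0 + 2 S^p_n` with random initial state
`X_0 = ±1` with equal probabilities, independent of the increments (modelled by `Y 0 = X_0`
with `Y 0 ~ stepDist (1/2)`, increments `Y (i+1) ~ stepDist p`, all independent, and
`V^p_n = Y 0 + 2 ∑_{1 ≤ i ≤ n} Y i`).  For odd integer boundaries `b_n ≥ 1`, the stopping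
time `T̃^p = inf{n ≥ 1 : |V^p_n| ≥ b_n}` is stochastically increasing in `p ∈ [0,1/2]` and
decreasing in `p ∈ [1/2,1]`: if `|p' - 1/2| > |p'' - 1/2|`, then
`P(T̃^{p'} > m) ≤ P(T̃^{p''} > m)` for every `m ≥ 1`. -/
theorem doubled_walk_stopping_time_stochastically_monotone
    {Ω' Ω'' : Type*} [MeasurableSpace Ω'] [MeasurableSpace Ω'']
    (μ' : Measure Ω') (μ'' : Measure Ω'')
    [IsProbabilityMeasure μ'] [IsProbabilityMeasure μ'']
    (p' p'' : ℝ) (hp' : p' ∈ Set.Icc (0 : ℝ) 1) (hp'' : p'' ∈ Set.Icc (0 : ℝ) 1)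
    (hpp : |p' - 1/2| > |p'' - 1/2|)
    (Y' : ℕ → Ω' → ℝ) (Y'' : ℕ → Ω'' → ℝ)
    (hY'meas : ∀ i, Measurable (Y' i)) (hY''meas : ∀ i, Measurable (Y'' i))
    (hY'indep : iIndepFun Y' μ')
    (hY''indep : iIndepFun Y'' μ'')
    (hY'0dist : Measure.map (Y' 0) μ' = stepDist (1/2))
    (hY''0dist : Measure.map (Y'' 0) μ'' = stepDist (1/2))
    (hY'dist : ∀ i, Measure.map (Y' (i + 1)) μ' = stepDist p')
    (hY''dist : ∀ i, Measure.map (Y'' (i + 1)) μ'' = stepDist p'')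
    (b : ℕ → ℕ) (hodd : ∀ n, 1 ≤ n → Odd (b n)) (hpos : ∀ n, 1 ≤ n → 1 ≤ b n)
    (m : ℕ) (hm : 1 ≤ m) :
    μ' {ω | ∀ n, 1 ≤ n → n ≤ m →
        |Y' 0 ω + 2 * ∑ i ∈ Finset.range n, Y' (i + 1) ω| < (b n : ℝ)}
      ≤ μ'' {ω | ∀ n, 1 ≤ n → n ≤ m →
        |Y'' 0 ω + 2 * ∑ i ∈ Finset.range n, Y'' (i + 1) ω| < (b n : ℝ)} :=
  doubled_walk_stopping_time_stochastically_monotone_general μ' μ'' p' p'' hp' hp'' hpp Y' Y''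
    hY'meas hY''meas hY'indep hY''indep hY'0dist hY''0dist hY'dist hY''dist b m
end

section
/- Let b_n ≥ 0 be non-negative integers satisfying b_{n+1} ≤ b_n for all n ≥ 1, and let T^p = inf{n ≥ 1 : |S_n^p| ≥ b_n}. Then, in terms of the likelihood ratio order, T^p is increasing in p ∈ [0,1/2] and decreasing in p ∈ [1/2,1]; in particular, for 0 ≤ p < p' ≤ 1/2 and any integers n ≤ n', P(T^{p'} = n) P(T^{p} = n') ≤ P(T^{p'} = n') P(T^{p} = n). -/
open MeasureTheory ProbabilityTheory Finset

/-- The event `{T = n}` where `T = inf{k ≥ 1 : |S_k| ≥ b_k}` for the walk with increments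
`X` and boundaries `b`: the walk first reaches the boundary at time `n`. -/
def firstHitEvent {Ω : Type*} (X : ℕ → Ω → ℝ) (b : ℕ → ℕ) (n : ℕ) : Set Ω :=
  {ω | (b n : ℝ) ≤ |∑ i ∈ Finset.range n, X i ω| ∧
    ∀ k, 1 ≤ k → k < n → |∑ i ∈ Finset.range k, X i ω| < (b k : ℝ)}

/-!
Put `θ = log ((1 - p) / p) / 2`, which is `≥ 0` and decreasing in `p ∈ (0, 1/2]`. Then
`p = e^{-θ} / (2 cosh θ)` and `1 - p = e^{θ} / (2 cosh θ)`, so a `±1` path `v` of length `m` has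
probability `e^{-θ S(v)} / (2 cosh θ)^m`, where `S(v)` is its endpoint. The paths first hitting
the boundary at time `m` form a set symmetric under `v ↦ -v`, hence
`P(T = m) = C_m(θ) / (2 cosh θ)^m` with `C_m(θ) = ∑ cosh (θ S(v))`. If `v` hits first at `n` and
`w` at `n' > n`, then `|S(w)| ≤ b_n ≤ |S(v)|`, because the walk is integer valued, moves by one
and `b` is non-increasing. Since `cosh (x w) cosh (y z) ≤ cosh (y w) cosh (x z)` whenever
`0 ≤ y ≤ x` and `|w| ≤ |z|`, the ratio `C_{n'} / C_n` is antitone on `[0, ∞)`, and so is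
`(2 cosh θ)^{n - n'}`. The case `p = 0`, where `θ = ∞`, follows by continuity in `p`.
-/

theorem Real.cosh_mul_cosh_le_cosh_mul_cosh {x y w z : ℝ} (hy : 0 ≤ y) (hyx : y ≤ x)
    (hwz : |w| ≤ |z|) :
    Real.cosh (x * w) * Real.cosh (y * z) ≤ Real.cosh (y * w) * Real.cosh (x * z) := by
  have hx : 0 ≤ x := hy.trans hyx
  have hw := abs_nonneg w
  have key (a c : ℝ) : Real.cosh a * Real.cosh c = (Real.cosh (a + c) + Real.cosh (a - c)) / 2 := by
    rw [Real.cosh_add, Real.cosh_sub]; ring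
  have habs (t u : ℝ) (ht : 0 ≤ t) : Real.cosh (t * u) = Real.cosh (t * |u|) := by
    rw [← Real.cosh_abs, abs_mul, abs_of_nonneg ht]
  rw [habs x w hx, habs y z hy, habs y w hy, habs x z hx, key, key]
  gcongr (?_ + ?_) / 2
  · refine Real.cosh_le_cosh.mpr (abs_le_abs_of_nonneg (by positivity) ?_)
    nlinarith
  · refine Real.cosh_le_cosh.mpr ((abs_le.mpr ⟨?_, ?_⟩).trans (neg_le_abs _))
    · nlinarith [mul_nonneg (sub_nonneg.2 hyx) (add_nonneg hw (abs_nonneg z))]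
    · nlinarith [mul_nonneg (add_nonneg hx hy) (sub_nonneg.2 hwz)]

theorem Real.sum_cosh_mul_sum_cosh_le {ι κ : Type*} (s : Finset ι) (t : Finset κ) {z : ι → ℝ}
    {w : κ → ℝ} (hwz : ∀ i ∈ s, ∀ j ∈ t, |w j| ≤ |z i|) {x y : ℝ} (hy : 0 ≤ y) (hyx : y ≤ x) :
    (∑ j ∈ t, Real.cosh (x * w j)) * ∑ i ∈ s, Real.cosh (y * z i)
      ≤ (∑ j ∈ t, Real.cosh (y * w j)) * ∑ i ∈ s, Real.cosh (x * z i) := by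
  rw [sum_mul_sum, sum_mul_sum]
  exact sum_le_sum fun j hj => sum_le_sum fun i hi =>
    Real.cosh_mul_cosh_le_cosh_mul_cosh hy hyx (hwz i hi j hj)

theorem Real.sum_exp_eq_sum_cosh {α : Type*} [InvolutiveNeg α] (s : Finset α)
    (hs : ∀ a ∈ s, -a ∈ s) (f : α → ℝ) (hf : ∀ a, f (-a) = -f a) :
    ∑ a ∈ s, Real.exp (f a) = ∑ a ∈ s, Real.cosh (f a) := by
  have hflip : ∑ a ∈ s, Real.exp (f a) = ∑ a ∈ s, Real.exp (-f a) :=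
    sum_nbij' Neg.neg Neg.neg hs hs (fun a _ => neg_neg a) (fun a _ => neg_neg a)
      (fun a _ => by rw [hf, neg_neg])
  simp only [Real.cosh_eq, ← sum_div, sum_add_distrib, ← hflip]
  ring

theorem ProbabilityTheory.iIndepFun.measure_preimage_eq_sum_prod {Ω ι β : Type*} [MeasurableSpace Ω]
    {μ : Measure Ω} [Fintype ι] [DecidableEq ι] [MeasurableSpace β] [MeasurableSingletonClass β]
    {X : ι → Ω → β} (hindep : iIndepFun X μ) (hX : ∀ i, Measurable (X i)) {V : Finset β}
    (hV : ∀ i, ∀ᵐ ω ∂μ, X i ω ∈ V) (P : (ι → β) → Prop) [DecidablePred P] :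
    μ ((fun ω i => X i ω) ⁻¹' {v | P v})
      = ∑ v ∈ Fintype.piFinset (fun _ => V) with P v, ∏ i, μ (X i ⁻¹' {v i}) := by
  set Φ : Ω → ι → β := fun ω i => X i ω
  have hΦ : Measurable Φ := measurable_pi_lambda _ hX
  have hae : ∀ᵐ ω ∂μ, Φ ω ∈ Fintype.piFinset fun _ => V := by
    filter_upwards [ae_all_iff.2 hV] with ω hω using Fintype.mem_piFinset.2 hω
  have hpre (v : ι → β) : Φ ⁻¹' {v} = ⋂ i ∈ univ, X i ⁻¹' {v i} := by
    ext ω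
    simp [Φ, funext_iff]
  calc μ (Φ ⁻¹' {v | P v})
      = μ (Φ ⁻¹' ↑({v ∈ Fintype.piFinset fun _ : ι => V | P v})) := by
        refine measure_congr ?_
        filter_upwards [hae] with ω hω
        exact propext ⟨fun h => mem_filter.2 ⟨hω, h⟩, fun h => (mem_filter.1 (mem_coe.1 h)).2⟩
    _ = ∑ v ∈ Fintype.piFinset (fun _ => V) with P v, μ.map Φ {v} := by
        rw [sum_measure_singleton, Measure.map_apply hΦ (Finset.measurableSet _)]
    _ = _ := sum_congr rfl fun v _ => by
        rw [Measure.map_apply hΦ (measurableSet_singleton v), hpre,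
          hindep.measure_inter_preimage_eq_mul _ fun i _ => measurableSet_singleton (v i)]

noncomputable def halfLogOdds (p : ℝ) : ℝ := Real.log ((1 - p) / p) / 2

noncomputable def stepWeight (p x : ℝ) : ℝ := if x = 1 then p else 1 - p

theorem halfLogOdds_nonneg {p : ℝ} (hp : 0 < p) (hp2 : p ≤ 1 / 2) : 0 ≤ halfLogOdds p := by
  refine div_nonneg (Real.log_nonneg ?_) zero_le_two
  rw [le_div_iff₀ hp]; linarith

theorem halfLogOdds_le_halfLogOdds {p p' : ℝ} (hp : 0 < p) (hpp' : p ≤ p') (hp' : p' < 1) :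
    halfLogOdds p' ≤ halfLogOdds p := by
  have hp'0 : 0 < p' := hp.trans_le hpp'
  unfold halfLogOdds
  gcongr ?_ / _
  refine Real.log_le_log (div_pos (by linarith) hp'0) ?_
  rw [div_le_div_iff₀ hp'0 hp]
  nlinarith

theorem stepWeight_eq_exp_div_cosh {p x : ℝ} (hp0 : 0 < p) (hp1 : p < 1)
    (hx : x ∈ ({1, -1} : Finset ℝ)) :
    stepWeight p x = Real.exp (-(halfLogOdds p * x)) / (2 * Real.cosh (halfLogOdds p)) := by
  have hexp : p * Real.exp (halfLogOdds p) ^ 2 = 1 - p := by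
    rw [← Real.exp_nat_mul, halfLogOdds, Nat.cast_ofNat, mul_div_cancel₀ _ two_ne_zero,
      Real.exp_log (div_pos (by linarith) hp0), mul_div_cancel₀ _ hp0.ne']
  have hpos := Real.exp_pos (halfLogOdds p)
  rw [Real.cosh_eq]
  rcases mem_insert.mp hx with rfl | hx
  · rw [stepWeight, if_pos rfl, mul_one, Real.exp_neg]
    field_simp
    linear_combination hexp
  · rw [mem_singleton.mp hx, stepWeight, if_neg (by norm_num), mul_neg_one, neg_neg, Real.exp_neg]
    field_simp
    linear_combination -hexp

theorem continuous_stepWeight (x : ℝ) : Continuous fun p => stepWeight p x := by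
  unfold stepWeight
  split_ifs <;> fun_prop

theorem stepDist_compl_pair (p : ℝ) : stepDist p (↑({1, -1} : Finset ℝ))ᶜ = 0 := by
  simp [stepDist]

theorem stepDist_singleton {p x : ℝ} (hx : x ∈ ({1, -1} : Finset ℝ)) :
    stepDist p {x} = ENNReal.ofReal (stepWeight p x) := by
  rcases mem_insert.mp hx with rfl | hx
  · norm_num [stepDist, stepWeight, Pi.single_apply]
  · rw [mem_singleton.mp hx]
    norm_num [stepDist, stepWeight, Pi.single_apply]

def IsFirstHit (b : ℕ → ℕ) (n : ℕ) (S : ℕ → ℝ) : Prop :=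
  (b n : ℝ) ≤ |S n| ∧ ∀ k, 1 ≤ k → k < n → |S k| < b k

def pathSum {n : ℕ} (v : Fin n → ℝ) (k : ℕ) : ℝ :=
  ∑ i ∈ range k, if h : i < n then v ⟨i, h⟩ else 0

open Classical in
noncomputable def hitPaths (b : ℕ → ℕ) (n : ℕ) : Finset (Fin n → ℝ) :=
  {v ∈ Fintype.piFinset fun _ => {1, -1} | IsFirstHit b n (pathSum v)}

theorem pathSum_of_le {n k : ℕ} (f : ℕ → ℝ) (hk : k ≤ n) :
    pathSum (fun i : Fin n => f i) k = ∑ i ∈ range k, f i :=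
  sum_congr rfl fun _ hi => dif_pos ((mem_range.mp hi).trans_le hk)

theorem pathSum_self {n : ℕ} (v : Fin n → ℝ) : pathSum v n = ∑ i, v i := by
  rw [pathSum, ← Fin.sum_univ_eq_sum_range (fun i => if h : i < n then v ⟨i, h⟩ else 0)]
  simp

theorem pathSum_neg {n : ℕ} (v : Fin n → ℝ) (k : ℕ) : pathSum (-v) k = -pathSum v k := by
  rw [pathSum, pathSum, ← sum_neg_distrib]
  refine sum_congr rfl fun i _ => ?_
  split_ifs <;> simp

theorem exists_int_pathSum {n : ℕ} {v : Fin n → ℝ} (hv : v ∈ Fintype.piFinset fun _ => {1, -1})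
    (k : ℕ) : ∃ z : ℤ, pathSum v k = z := by
  refine sum_induction _ (fun x : ℝ => ∃ z : ℤ, x = z)
    (fun _ _ ⟨a, ha⟩ ⟨c, hc⟩ => ⟨a + c, by rw [ha, hc]; norm_cast⟩) ⟨0, Int.cast_zero.symm⟩
    fun i _ => ?_
  split_ifs with h
  · rcases mem_insert.mp (Fintype.mem_piFinset.mp hv ⟨i, h⟩) with h1 | h1
    · exact ⟨1, by rw [h1, Int.cast_one]⟩
    · exact ⟨-1, by rw [mem_singleton.mp h1]; norm_num⟩
  · exact ⟨0, Int.cast_zero.symm⟩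

theorem firstHitEvent_eq_preimage {Ω : Type*} (X : ℕ → Ω → ℝ) (b : ℕ → ℕ) (n : ℕ) :
    firstHitEvent X b n = (fun ω (i : Fin n) => X i ω) ⁻¹' {v | IsFirstHit b n (pathSum v)} := by
  ext ω
  simp only [firstHitEvent, IsFirstHit, Set.mem_preimage, Set.mem_ofPred_eq]
  refine and_congr (by rw [pathSum_of_le (X · ω) le_rfl]) (forall_congr' fun k => ?_)
  exact imp_congr_right fun _ => forall_congr' fun hkn => by rw [pathSum_of_le (X · ω) hkn.le]

theorem mem_hitPaths {b : ℕ → ℕ} {n : ℕ} {v : Fin n → ℝ} :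
    v ∈ hitPaths b n ↔ v ∈ Fintype.piFinset (fun _ => {1, -1}) ∧ IsFirstHit b n (pathSum v) := by
  classical
  exact mem_filter

theorem neg_mem_hitPaths {b : ℕ → ℕ} {n : ℕ} {v : Fin n → ℝ} (hv : v ∈ hitPaths b n) :
    -v ∈ hitPaths b n := by
  simp only [mem_hitPaths, Fintype.mem_piFinset, IsFirstHit, pathSum_neg, abs_neg] at hv ⊢
  refine ⟨fun i => ?_, hv.2⟩
  rcases mem_insert.mp (hv.1 i) with h | h
  · simp [h]
  · simp [mem_singleton.mp h]

theorem le_abs_sum_of_mem_hitPaths {b : ℕ → ℕ} {n : ℕ} {v : Fin n → ℝ} (hv : v ∈ hitPaths b n) :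
    (b n : ℝ) ≤ |∑ i, v i| := by
  rw [← pathSum_self]
  exact (mem_hitPaths.mp hv).2.1

theorem abs_sum_le_of_mem_hitPaths {b : ℕ → ℕ} (hb : ∀ n, 1 ≤ n → b (n + 1) ≤ b n) {n n' : ℕ}
    (hn : 1 ≤ n) (hnn' : n < n') {v : Fin n' → ℝ} (hv : v ∈ hitPaths b n') :
    |∑ i, v i| ≤ b n := by
  obtain ⟨k, rfl⟩ : ∃ k, n' = k + 1 := Nat.exists_eq_add_one_of_ne_zero (by omega)
  obtain ⟨hpaths, -, hbefore⟩ := mem_hitPaths.mp hv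
  obtain ⟨z, hz⟩ := exists_int_pathSum hpaths k
  have hstep : |v (Fin.last k)| = 1 := by
    rcases mem_insert.mp (Fintype.mem_piFinset.mp hpaths (Fin.last k)) with h | h
    · simp [h]
    · simp [mem_singleton.mp h]
  have hz_lt : |z| < b k := by exact_mod_cast hz ▸ hbefore k (by omega) (by omega)
  have hbk : b k ≤ b n := antitoneOn_nat_Ici_of_succ_le hb hn (show 1 ≤ k by omega) (by omega)
  rw [← pathSum_self, pathSum, sum_range_succ, ← pathSum, dif_pos k.lt_add_one, hz]
  calc |(z : ℝ) + v ⟨k, _⟩| ≤ |(z : ℝ)| + 1 := (abs_add_le _ _).trans_eq (by rw [← hstep]; rfl)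
    _ ≤ b k := by exact_mod_cast (show |z| + 1 ≤ b k by omega)
    _ ≤ b n := by exact_mod_cast hbk

noncomputable def hitProb (b : ℕ → ℕ) (p : ℝ) (n : ℕ) : ℝ :=
  ∑ v ∈ hitPaths b n, ∏ i, stepWeight p (v i)

noncomputable def hitCoshSum (b : ℕ → ℕ) (n : ℕ) (t : ℝ) : ℝ :=
  ∑ v ∈ hitPaths b n, Real.cosh (t * ∑ i, v i)

theorem stepWeight_nonneg {p : ℝ} (hp0 : 0 ≤ p) (hp1 : p ≤ 1) (x : ℝ) : 0 ≤ stepWeight p x := by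
  unfold stepWeight
  split_ifs <;> linarith

theorem hitProb_nonneg (b : ℕ → ℕ) {p : ℝ} (hp0 : 0 ≤ p) (hp1 : p ≤ 1) (n : ℕ) :
    0 ≤ hitProb b p n :=
  sum_nonneg fun _ _ => prod_nonneg fun _ _ => stepWeight_nonneg hp0 hp1 _

theorem continuous_hitProb (b : ℕ → ℕ) (n : ℕ) : Continuous fun p => hitProb b p n :=
  continuous_finsetSum _ fun _ _ => continuous_finsetProd _ fun _ _ => continuous_stepWeight _

theorem measure_firstHitEvent {Ω : Type*} [MeasurableSpace Ω] {μ : Measure Ω} {p : ℝ}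
    (hp0 : 0 ≤ p) (hp1 : p ≤ 1) {X : ℕ → Ω → ℝ} (hXmeas : ∀ i, Measurable (X i))
    (hXindep : iIndepFun X μ) (hXdist : ∀ i, μ.map (X i) = stepDist p) (b : ℕ → ℕ) (n : ℕ) :
    μ (firstHitEvent X b n) = ENNReal.ofReal (hitProb b p n) := by
  classical
  have hlaw (i : ℕ) {s : Set ℝ} (hs : MeasurableSet s) : μ (X i ⁻¹' s) = stepDist p s := by
    rw [← Measure.map_apply (hXmeas i) hs, hXdist]
  have hpair (i : Fin n) : ∀ᵐ ω ∂μ, X i ω ∈ ({1, -1} : Finset ℝ) :=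
    ae_iff.2 ((hlaw i (Finset.measurableSet _).compl).trans (stepDist_compl_pair p))
  have hindep : iIndepFun (fun i : Fin n => X i) μ := hXindep.precomp Fin.val_injective
  rw [firstHitEvent_eq_preimage, hindep.measure_preimage_eq_sum_prod (fun i => hXmeas i) hpair,
    hitProb,
    ENNReal.ofReal_sum_of_nonneg fun _ _ => prod_nonneg fun _ _ => stepWeight_nonneg hp0 hp1 _]
  refine sum_congr rfl fun v hv => ?_
  rw [ENNReal.ofReal_prod_of_nonneg fun _ _ => stepWeight_nonneg hp0 hp1 _]
  exact prod_congr rfl fun i _ => (hlaw i (measurableSet_singleton _)).trans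
    (stepDist_singleton (Fintype.mem_piFinset.1 (mem_hitPaths.1 hv).1 i))

theorem hitProb_eq_hitCoshSum_div {p : ℝ} (hp0 : 0 < p) (hp1 : p < 1) (b : ℕ → ℕ) (n : ℕ) :
    hitProb b p n = hitCoshSum b n (halfLogOdds p) / (2 * Real.cosh (halfLogOdds p)) ^ n := by
  set θ := halfLogOdds p
  have hweight : ∀ v ∈ hitPaths b n,
      ∏ i, stepWeight p (v i) = Real.exp (-(θ * ∑ i, v i)) / (2 * Real.cosh θ) ^ n := by
    intro v hv
    rw [prod_congr rfl fun i _ => stepWeight_eq_exp_div_cosh hp0 hp1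
      (Fintype.mem_piFinset.1 (mem_hitPaths.1 hv).1 i), prod_div_distrib, ← Real.exp_sum,
      prod_const, card_univ, Fintype.card_fin, mul_sum, sum_neg_distrib]
  rw [hitProb, sum_congr rfl hweight, ← sum_div, hitCoshSum,
    Real.sum_exp_eq_sum_cosh _ (fun _ => neg_mem_hitPaths) (fun v => -(θ * ∑ i, v i))
      (fun v => by simp only [Pi.neg_apply, sum_neg_distrib, mul_neg])]
  simp only [Real.cosh_neg]

theorem hitCoshSum_mul_le {b : ℕ → ℕ} (hb : ∀ n, 1 ≤ n → b (n + 1) ≤ b n) {n n' : ℕ}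
    (hn : 1 ≤ n) (hnn' : n < n') {x y : ℝ} (hy : 0 ≤ y) (hyx : y ≤ x) :
    hitCoshSum b n' x * hitCoshSum b n y ≤ hitCoshSum b n' y * hitCoshSum b n x :=
  Real.sum_cosh_mul_sum_cosh_le _ _ (fun _ hv _ hw => (abs_sum_le_of_mem_hitPaths hb hn hnn' hw).trans
    (le_abs_sum_of_mem_hitPaths hv)) hy hyx

theorem hitProb_mul_le_of_pos {b : ℕ → ℕ} (hb : ∀ n, 1 ≤ n → b (n + 1) ≤ b n) {n n' : ℕ}
    (hn : 1 ≤ n) (hnn' : n ≤ n') {p p' : ℝ} (hp0 : 0 < p) (hpp' : p ≤ p') (hp'half : p' ≤ 1 / 2) :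
    hitProb b p' n * hitProb b p n' ≤ hitProb b p' n' * hitProb b p n := by
  obtain rfl | hlt := hnn'.eq_or_lt
  · exact le_rfl
  obtain ⟨d, rfl⟩ := Nat.exists_eq_add_of_le hnn'
  set θ := halfLogOdds p
  set θ' := halfLogOdds p'
  have hθ' : 0 ≤ θ' := halfLogOdds_nonneg (hp0.trans_le hpp') hp'half
  have hθ'θ : θ' ≤ θ := halfLogOdds_le_halfLogOdds hp0 hpp' (by linarith)
  have hcosh : 2 * Real.cosh θ' ≤ 2 * Real.cosh θ := by
    gcongr
    exact Real.cosh_le_cosh.2 (abs_le_abs_of_nonneg hθ' hθ'θ)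
  have hC (m : ℕ) (t : ℝ) : 0 ≤ hitCoshSum b m t := sum_nonneg fun _ _ => (Real.cosh_pos _).le
  have ha : 0 < 2 * Real.cosh θ' := by positivity
  rw [hitProb_eq_hitCoshSum_div hp0 (by linarith), hitProb_eq_hitCoshSum_div hp0 (by linarith),
    hitProb_eq_hitCoshSum_div (hp0.trans_le hpp') (by linarith),
    hitProb_eq_hitCoshSum_div (hp0.trans_le hpp') (by linarith), pow_add, pow_add]
  calc hitCoshSum b n θ' / (2 * Real.cosh θ') ^ n
        * (hitCoshSum b (n + d) θ / ((2 * Real.cosh θ) ^ n * (2 * Real.cosh θ) ^ d))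
      = hitCoshSum b (n + d) θ * hitCoshSum b n θ'
          / ((2 * Real.cosh θ') ^ n * (2 * Real.cosh θ) ^ n * (2 * Real.cosh θ) ^ d) := by ring
    _ ≤ hitCoshSum b (n + d) θ' * hitCoshSum b n θ
          / ((2 * Real.cosh θ') ^ n * (2 * Real.cosh θ) ^ n * (2 * Real.cosh θ) ^ d) := by
        gcongr ?_ / _
        exact hitCoshSum_mul_le hb hn hlt hθ' hθ'θ
    _ ≤ hitCoshSum b (n + d) θ' * hitCoshSum b n θ
          / ((2 * Real.cosh θ') ^ n * (2 * Real.cosh θ) ^ n * (2 * Real.cosh θ') ^ d) := by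
        gcongr
        exact mul_nonneg (hC _ _) (hC _ _)
    _ = _ := by ring

theorem hitProb_mul_le {b : ℕ → ℕ} (hb : ∀ n, 1 ≤ n → b (n + 1) ≤ b n) {n n' : ℕ}
    (hn : 1 ≤ n) (hnn' : n ≤ n') {p p' : ℝ} (hp0 : 0 ≤ p) (hpp' : p < p') (hp'half : p' ≤ 1 / 2) :
    hitProb b p' n * hitProb b p n' ≤ hitProb b p' n' * hitProb b p n := by
  set S := {q | hitProb b p' n * hitProb b q n' ≤ hitProb b p' n' * hitProb b q n}
  have hclosed : IsClosed S := isClosed_le (continuous_const.mul (continuous_hitProb b n'))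
    (continuous_const.mul (continuous_hitProb b n))
  have hpos : Set.Ioo 0 p' ⊆ S := fun q hq => hitProb_mul_le_of_pos hb hn hnn' hq.1 hq.2.le hp'half
  have hIcc : Set.Icc 0 p' ⊆ S := by
    rw [← closure_Ioo (hp0.trans_lt hpp').ne]
    exact closure_minimal hpos hclosed
  exact hIcc ⟨hp0, hpp'.le⟩

theorem bernoulli_walk_stopping_time_likelihood_ratio_monotone_general
    {Ω Ω' : Type*} [MeasurableSpace Ω] [MeasurableSpace Ω']
    (μ : Measure Ω) (μ' : Measure Ω')
    (p p' : ℝ) (hp0 : 0 ≤ p) (hpp' : p < p') (hp'half : p' ≤ 1/2)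
    (X : ℕ → Ω → ℝ) (X' : ℕ → Ω' → ℝ)
    (hXmeas : ∀ i, Measurable (X i)) (hX'meas : ∀ i, Measurable (X' i))
    (hXindep : iIndepFun X μ)
    (hX'indep : iIndepFun X' μ')
    (hXdist : ∀ i, Measure.map (X i) μ = stepDist p)
    (hX'dist : ∀ i, Measure.map (X' i) μ' = stepDist p')
    (b : ℕ → ℕ) (hb : ∀ n, 1 ≤ n → b (n + 1) ≤ b n)
    (n n' : ℕ) (hn : 1 ≤ n) (hnn' : n ≤ n') :
    μ' (firstHitEvent X' b n) * μ (firstHitEvent X b n')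
      ≤ μ' (firstHitEvent X' b n') * μ (firstHitEvent X b n) := by
  have hp'0 : 0 ≤ p' := hp0.trans hpp'.le
  simp only [measure_firstHitEvent hp0 (by linarith) hXmeas hXindep hXdist,
    measure_firstHitEvent hp'0 (by linarith) hX'meas hX'indep hX'dist]
  rw [← ENNReal.ofReal_mul (hitProb_nonneg b hp'0 (by linarith) n),
    ← ENNReal.ofReal_mul (hitProb_nonneg b hp'0 (by linarith) n')]
  exact ENNReal.ofReal_le_ofReal (hitProb_mul_le hb hn hnn' hp0 hpp' hp'half)

/-- **Theorem 6.** Let `b_n ≥ 0` be non-increasing integer boundaries and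
`T^p = inf{n ≥ 1 : |S^p_n| ≥ b_n}` for the Bernoulli random walk `S^p`.  Then, in the
likelihood ratio order, `T^p` is increasing in `p ∈ [0,1/2]` (and, by symmetry, decreasing in
`p ∈ [1/2,1]`): for `0 ≤ p < p' ≤ 1/2` and integers `1 ≤ n ≤ n'`,
`P(T^{p'} = n) ⬝ P(T^{p} = n') ≤ P(T^{p'} = n') ⬝ P(T^{p} = n)`. -/
theorem bernoulli_walk_stopping_time_likelihood_ratio_monotone
    {Ω Ω' : Type*} [MeasurableSpace Ω] [MeasurableSpace Ω']
    (μ : Measure Ω) (μ' : Measure Ω')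
    [IsProbabilityMeasure μ] [IsProbabilityMeasure μ']
    (p p' : ℝ) (hp0 : 0 ≤ p) (hpp' : p < p') (hp'half : p' ≤ 1/2)
    (X : ℕ → Ω → ℝ) (X' : ℕ → Ω' → ℝ)
    (hXmeas : ∀ i, Measurable (X i)) (hX'meas : ∀ i, Measurable (X' i))
    (hXindep : iIndepFun X μ)
    (hX'indep : iIndepFun X' μ')
    (hXdist : ∀ i, Measure.map (X i) μ = stepDist p)
    (hX'dist : ∀ i, Measure.map (X' i) μ' = stepDist p')
    (b : ℕ → ℕ) (hb : ∀ n, 1 ≤ n → b (n + 1) ≤ b n)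
    (n n' : ℕ) (hn : 1 ≤ n) (hnn' : n ≤ n') :
    μ' (firstHitEvent X' b n) * μ (firstHitEvent X b n')
      ≤ μ' (firstHitEvent X' b n') * μ (firstHitEvent X b n) :=
  bernoulli_walk_stopping_time_likelihood_ratio_monotone_general μ μ' p p' hp0 hpp' hp'half X X'
    hXmeas hX'meas hXindep hX'indep hXdist hX'dist b hb n n' hn hnn'
end
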